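/- For every n ≥ 1 and every λ ∈ k there is a short exact sequence of representations of Q̃ of the form 0 → P₄ⁿ ⊕ P₅ⁿ → P₁ⁿ ⊕ P₂ⁿ → M_n(λ) → 0. -/
import Mathlib


variable (k : Type) [Field k]

/-- A finite-dimensional representation of the quiver `Q̃` with vertices `1,…,5`
and arrows `a : 1 → 3`, `b : 2 → 3`, `c : 3 → 4`, `d : 3 → 5`. -/
structure Q5Rep where
  V1 : Type
  V2 : Type
  V3 : Type
  V4 : Type
  V5 : Type
  [acg1 : AddCommGroup V1]
  [acg2 : AddCommGroup V2]
  [acg3 : AddCommGroup V3]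
  [acg4 : AddCommGroup V4]
  [acg5 : AddCommGroup V5]
  [mod1 : Module k V1]
  [mod2 : Module k V2]
  [mod3 : Module k V3]
  [mod4 : Module k V4]
  [mod5 : Module k V5]
  [fin1 : FiniteDimensional k V1]
  [fin2 : FiniteDimensional k V2]
  [fin3 : FiniteDimensional k V3]
  [fin4 : FiniteDimensional k V4]
  [fin5 : FiniteDimensional k V5]
  ma : V1 →ₗ[k] V3
  mb : V2 →ₗ[k] V3
  mc : V3 →ₗ[k] V4
  md : V3 →ₗ[k] V5

attribute [instance] Q5Rep.acg1 Q5Rep.acg2 Q5Rep.acg3 Q5Rep.acg4 Q5Rep.acg5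
  Q5Rep.mod1 Q5Rep.mod2 Q5Rep.mod3 Q5Rep.mod4 Q5Rep.mod5
  Q5Rep.fin1 Q5Rep.fin2 Q5Rep.fin3 Q5Rep.fin4 Q5Rep.fin5

variable {k}

/-- Morphisms of representations of `Q̃`. -/
@[ext]
structure Q5Hom (M N : Q5Rep k) where
  f1 : M.V1 →ₗ[k] N.V1
  f2 : M.V2 →ₗ[k] N.V2
  f3 : M.V3 →ₗ[k] N.V3
  f4 : M.V4 →ₗ[k] N.V4
  f5 : M.V5 →ₗ[k] N.V5
  comm_a : f3 ∘ₗ M.ma = N.ma ∘ₗ f1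
  comm_b : f3 ∘ₗ M.mb = N.mb ∘ₗ f2
  comm_c : f4 ∘ₗ M.mc = N.mc ∘ₗ f3
  comm_d : f5 ∘ₗ M.md = N.md ∘ₗ f3

/-- Two representations are isomorphic iff there is a morphism all of whose
components are bijective. -/
def Q5Iso (M N : Q5Rep k) : Prop :=
  ∃ f : Q5Hom M N, Function.Bijective f.f1 ∧ Function.Bijective f.f2 ∧
    Function.Bijective f.f3 ∧ Function.Bijective f.f4 ∧ Function.Bijective f.f5

/-- The zero representation(s). -/
def Q5Rep.IsZeroRep (M : Q5Rep k) : Prop :=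
  Subsingleton M.V1 ∧ Subsingleton M.V2 ∧ Subsingleton M.V3 ∧
    Subsingleton M.V4 ∧ Subsingleton M.V5

/-- Vertexwise direct sum of representations. -/
def Q5Rep.dsum (M N : Q5Rep k) : Q5Rep k where
  V1 := M.V1 × N.V1
  V2 := M.V2 × N.V2
  V3 := M.V3 × N.V3
  V4 := M.V4 × N.V4
  V5 := M.V5 × N.V5
  ma := M.ma.prodMap N.ma
  mb := M.mb.prodMap N.mb
  mc := M.mc.prodMap N.mc
  md := M.md.prodMap N.md

/-- Direct sum of `n` copies of a representation. -/
def Q5Rep.dpow (M : Q5Rep k) (n : ℕ) : Q5Rep k where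
  V1 := Fin n → M.V1
  V2 := Fin n → M.V2
  V3 := Fin n → M.V3
  V4 := Fin n → M.V4
  V5 := Fin n → M.V5
  ma := M.ma.compLeft (Fin n)
  mb := M.mb.compLeft (Fin n)
  mc := M.mc.compLeft (Fin n)
  md := M.md.compLeft (Fin n)

/-- A representation is indecomposable if it is nonzero and not isomorphic to a
direct sum of two nonzero representations. -/
def Q5Rep.Indecomposable (M : Q5Rep k) : Prop :=
  ¬ M.IsZeroRep ∧ ∀ A B : Q5Rep k, Q5Iso M (A.dsum B) → A.IsZeroRep ∨ B.IsZeroRep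

/-- `0 → A → B → C → 0` is short exact (vertexwise). -/
def Q5ShortExact {A B C : Q5Rep k} (f : Q5Hom A B) (g : Q5Hom B C) : Prop :=
  (Function.Injective f.f1 ∧ Function.Injective f.f2 ∧ Function.Injective f.f3 ∧
    Function.Injective f.f4 ∧ Function.Injective f.f5) ∧
  (Function.Surjective g.f1 ∧ Function.Surjective g.f2 ∧ Function.Surjective g.f3 ∧
    Function.Surjective g.f4 ∧ Function.Surjective g.f5) ∧
  (LinearMap.range f.f1 = LinearMap.ker g.f1 ∧ LinearMap.range f.f2 = LinearMap.ker g.f2 ∧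
    LinearMap.range f.f3 = LinearMap.ker g.f3 ∧ LinearMap.range f.f4 = LinearMap.ker g.f4 ∧
    LinearMap.range f.f5 = LinearMap.ker g.f5)

variable (k)

/-- The `n×n` Jordan block with eigenvalue `lam`, as a linear endomorphism of `kⁿ`. -/
def jordan (n : ℕ) (lam : k) : (Fin n → k) →ₗ[k] (Fin n → k) :=
  Matrix.mulVecLin (Matrix.of fun i j : Fin n =>
    if i = j then lam else if (i : ℕ) + 1 = (j : ℕ) then 1 else 0)

/-- The representation `M_n(λ)` of `Q̃`: `V₁ = V₂ = V₄ = V₅ = kⁿ`, `V₃ = kⁿ ⊕ kⁿ`,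
`m_a x = (x,0)`, `m_b y = (0,y)`, `m_c (u,v) = u + v`, `m_d (u,v) = u + J_n(λ) v`. -/
def M5lam (n : ℕ) (lam : k) : Q5Rep k where
  V1 := Fin n → k
  V2 := Fin n → k
  V3 := (Fin n → k) × (Fin n → k)
  V4 := Fin n → k
  V5 := Fin n → k
  ma := LinearMap.inl k _ _
  mb := LinearMap.inr k _ _
  mc := LinearMap.coprod LinearMap.id LinearMap.id
  md := LinearMap.coprod LinearMap.id (jordan k n lam)

/-- The indecomposable projective `P₁ = (k,0,k,k,k)` of `Q̃`. -/
def Q5P1 : Q5Rep k where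
  V1 := k
  V2 := Fin 0 → k
  V3 := k
  V4 := k
  V5 := k
  ma := LinearMap.id
  mb := 0
  mc := LinearMap.id
  md := LinearMap.id

/-- The indecomposable projective `P₂ = (0,k,k,k,k)` of `Q̃`. -/
def Q5P2 : Q5Rep k where
  V1 := Fin 0 → k
  V2 := k
  V3 := k
  V4 := k
  V5 := k
  ma := 0
  mb := LinearMap.id
  mc := LinearMap.id
  md := LinearMap.id

/-- The indecomposable projective `P₄ = (0,0,0,k,0)` of `Q̃`. -/
def Q5P4 : Q5Rep k where
  V1 := Fin 0 → k
  V2 := Fin 0 → k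
  V3 := Fin 0 → k
  V4 := k
  V5 := Fin 0 → k
  ma := 0
  mb := 0
  mc := 0
  md := 0

/-- The indecomposable projective `P₅ = (0,0,0,0,k)` of `Q̃`. -/
def Q5P5 : Q5Rep k where
  V1 := Fin 0 → k
  V2 := Fin 0 → k
  V3 := Fin 0 → k
  V4 := Fin 0 → k
  V5 := k
  ma := 0
  mb := 0
  mc := 0
  md := 0

section Stmt14Aux

variable (k : Type) [Field k] (n : ℕ)

private def eff4 : ((Fin n → k) × (Fin n → (Fin 0 → k))) →ₗ[k] ((Fin n → k) × (Fin n → k)) :=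
  (LinearMap.id.prod (-LinearMap.id)).comp (LinearMap.fst k _ _)

private def eff5 (lam : k) :
    ((Fin n → (Fin 0 → k)) × (Fin n → k)) →ₗ[k] ((Fin n → k) × (Fin n → k)) :=
  ((-(jordan k n lam)).prod LinearMap.id).comp (LinearMap.snd k _ _)

private def gee4 : ((Fin n → k) × (Fin n → k)) →ₗ[k] (Fin n → k) :=
  LinearMap.coprod LinearMap.id LinearMap.id

private def gee5 (lam : k) : ((Fin n → k) × (Fin n → k)) →ₗ[k] (Fin n → k) :=
  LinearMap.coprod LinearMap.id (jordan k n lam)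

private lemma eff4_inj : Function.Injective (eff4 k n) := by
  intro x y h
  have h1 := congrArg Prod.fst h
  exact Prod.ext h1 (Subsingleton.elim _ _)

private lemma eff5_inj (lam : k) : Function.Injective (eff5 k n lam) := by
  intro x y h
  have h2 := congrArg Prod.snd h
  exact Prod.ext (Subsingleton.elim _ _) h2

private lemma gee4_surj : Function.Surjective (gee4 k n) := by
  intro x
  refine ⟨(x, 0), ?_⟩
  simp [gee4]

private lemma gee5_surj (lam : k) : Function.Surjective (gee5 k n lam) := by
  intro x
  refine ⟨(x, 0), ?_⟩
  simp [gee5]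

private lemma range_eff4 : LinearMap.range (eff4 k n) = LinearMap.ker (gee4 k n) := by
  apply le_antisymm
  · rintro x ⟨y, rfl⟩
    simp [eff4, gee4]
  · rintro ⟨x1, x2⟩ hx
    have h : x1 + x2 = 0 := by simpa [gee4] using hx
    refine ⟨(x1, 0), ?_⟩
    exact Prod.ext rfl (neg_eq_of_add_eq_zero_right h)

private lemma range_eff5 (lam : k) :
    LinearMap.range (eff5 k n lam) = LinearMap.ker (gee5 k n lam) := by
  apply le_antisymm
  · rintro x ⟨y, rfl⟩
    simp [eff5, gee5]
  · rintro ⟨x1, x2⟩ hx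
    have h : x1 + jordan k n lam x2 = 0 := by simpa [gee5] using hx
    refine ⟨(0, x2), ?_⟩
    exact Prod.ext (neg_eq_of_add_eq_zero_left h) rfl

end Stmt14Aux

/-- for `n ≥ 1` and `λ ∈ k` there is a short exact sequence
`0 → P₄ⁿ ⊕ P₅ⁿ → P₁ⁿ ⊕ P₂ⁿ → M_n(λ) → 0` of representations of `Q̃`. -/
theorem stmt14 (k : Type) [Field k] (n : ℕ) (hn : 1 ≤ n) (lam : k) :
    ∃ (f : Q5Hom (((Q5P4 k).dpow n).dsum ((Q5P5 k).dpow n))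
        (((Q5P1 k).dpow n).dsum ((Q5P2 k).dpow n)))
      (g : Q5Hom (((Q5P1 k).dpow n).dsum ((Q5P2 k).dpow n)) (M5lam k n lam)),
      Q5ShortExact f g := by
  classical
  haveI i1 : Subsingleton ((((Q5P4 k).dpow n).dsum ((Q5P5 k).dpow n)).V1) :=
    inferInstanceAs (Subsingleton ((Fin n → Fin 0 → k) × (Fin n → Fin 0 → k)))
  haveI i2 : Subsingleton ((((Q5P4 k).dpow n).dsum ((Q5P5 k).dpow n)).V2) :=
    inferInstanceAs (Subsingleton ((Fin n → Fin 0 → k) × (Fin n → Fin 0 → k)))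
  haveI i3 : Subsingleton ((((Q5P4 k).dpow n).dsum ((Q5P5 k).dpow n)).V3) :=
    inferInstanceAs (Subsingleton ((Fin n → Fin 0 → k) × (Fin n → Fin 0 → k)))
  haveI i6 : Subsingleton (((Q5P2 k).dpow n).V1) :=
    inferInstanceAs (Subsingleton (Fin n → Fin 0 → k))
  haveI i7 : Subsingleton (((Q5P1 k).dpow n).V2) :=
    inferInstanceAs (Subsingleton (Fin n → Fin 0 → k))
  haveI i8 : Subsingleton ((Q5P2 k).V1) := inferInstanceAs (Subsingleton (Fin 0 → k))
  haveI i9 : Subsingleton ((Q5P1 k).V2) := inferInstanceAs (Subsingleton (Fin 0 → k))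
  refine ⟨
    { f1 := 0
      f2 := 0
      f3 := 0
      f4 := eff4 k n
      f5 := eff5 k n lam
      comm_a := by apply LinearMap.ext; intro x; rw [Subsingleton.elim x 0]; simp
      comm_b := by apply LinearMap.ext; intro x; rw [Subsingleton.elim x 0]; simp
      comm_c := by apply LinearMap.ext; intro x; rw [Subsingleton.elim x 0]; simp
      comm_d := by apply LinearMap.ext; intro x; rw [Subsingleton.elim x 0]; simp },
    { f1 := LinearMap.fst k (Fin n → k) (Fin n → (Fin 0 → k))
      f2 := LinearMap.snd k (Fin n → (Fin 0 → k)) (Fin n → k)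
      f3 := LinearMap.id
      f4 := gee4 k n
      f5 := gee5 k n lam
      comm_a := by
        apply LinearMap.ext; intro x
        refine Prod.ext rfl ?_
        funext j
        show (Q5P2 k).ma (x.2 j) = 0
        rw [Subsingleton.elim (x.2 j) 0]; simp
      comm_b := by
        apply LinearMap.ext; intro x
        refine Prod.ext ?_ rfl
        funext j
        show (Q5P1 k).mb (x.1 j) = 0
        rw [Subsingleton.elim (x.1 j) 0]; simp
      comm_c := by apply LinearMap.ext; intro x; rfl
      comm_d := by apply LinearMap.ext; intro x; rfl },
    ?_, ?_, ?_⟩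
  · refine ⟨?_, ?_, ?_, eff4_inj k n, eff5_inj k n lam⟩
    · intro x y _; exact Subsingleton.elim x y
    · intro x y _; exact Subsingleton.elim x y
    · intro x y _; exact Subsingleton.elim x y
  · refine ⟨?_, ?_, ?_, gee4_surj k n, gee5_surj k n lam⟩
    · intro x; exact ⟨(x, 0), rfl⟩
    · intro x; exact ⟨(0, x), rfl⟩
    · intro x; exact ⟨x, rfl⟩
  · refine ⟨?_, ?_, ?_, range_eff4 k n, range_eff5 k n lam⟩
    · apply le_antisymm
      · rintro x ⟨y, rfl⟩
        rw [Subsingleton.elim y 0]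
        simp
      · intro x hx
        have hx1 : x.1 = 0 := LinearMap.mem_ker.mp hx
        have : x = 0 := Prod.ext hx1 (Subsingleton.elim _ _)
        rw [this]; exact zero_mem _
    · apply le_antisymm
      · rintro x ⟨y, rfl⟩
        rw [Subsingleton.elim y 0]
        simp
      · intro x hx
        have hx2 : x.2 = 0 := LinearMap.mem_ker.mp hx
        have : x = 0 := Prod.ext (Subsingleton.elim _ _) hx2
        rw [this]; exact zero_mem _
    · apply le_antisymm
      · rintro x ⟨y, rfl⟩
        rw [Subsingleton.elim y 0]
        simp
      · intro x hx
        have : x = 0 := LinearMap.mem_ker.mp hx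
        rw [this]; exact zero_mem _
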